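/- Let T be a tree with diameter at least 3. If u and v are vertices of T with d_T(u,v) = 3, then the convex hull of {u,v} in the complementary prism TT̄ is the entire vertex set V(TT̄). -/

import Mathlib

/-
Write `x̄` for the copy in `T̄` of a vertex `x`. In `TT̄` the vertices `u, v` are at distance 3,
since a common neighbour would be one in `T` or force `u = v`. So both `u a b v` (a shortest
`T`-path) and `u ū v̄ v` are geodesics; the hull contains `a, b, ū, v̄`, and then `ā`, `b̄` as
midpoints of `a, v̄` and `b, ū`. As `T` has neither triangles nor 4-cycles, a vertex `x` off the
path is adjacent to at most one of `u, a, b, v`, so some edge `pq` of the path misses the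
neighbourhood of `x`, and `x̄` is a midpoint of the non-adjacent pair `p̄, q̄`. Once all of `T̄` is
in the hull, a `T`-neighbour `x` of a vertex `p` of the hull is the midpoint of `p, x̄`, and
connectivity of `T` spreads this from `u` to every vertex.
-/

open SimpleGraph

/-- Adjacency of the complementary prism: copies of `G` and `Gᶜ` joined by a perfect matching. -/
def prismAdj {V : Type*} (G : SimpleGraph V) : V ⊕ V → V ⊕ V → Prop
  | Sum.inl a, Sum.inl b => G.Adj a b
  | Sum.inr a, Sum.inr b => Gᶜ.Adj a b
  | Sum.inl a, Sum.inr b => a = b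
  | Sum.inr a, Sum.inl b => a = b

/-- The complementary prism `G G̅` of a graph `G`. -/
def compPrism {V : Type*} (G : SimpleGraph V) : SimpleGraph (V ⊕ V) where
  Adj := prismAdj G
  symm := by
    constructor
    rintro (a | a) (b | b) h
    · exact h.symm
    · exact h.symm
    · exact h.symm
    · exact h.symm
  loopless := by
    constructor
    rintro (a | a) h
    · exact G.loopless.irrefl a h
    · exact Gᶜ.loopless.irrefl a h

/-- `w` lies on some shortest `u,v`-path (geodesic) of `H`. -/
def inInterval {V : Type*} (H : SimpleGraph V) (u v w : V) : Prop :=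
  ∃ p : H.Walk u v, p.IsPath ∧ p.length = H.dist u v ∧ w ∈ p.support

/-- A set of vertices is geodesically convex. -/
def IsGeoConvex {V : Type*} (H : SimpleGraph V) (S : Set V) : Prop :=
  ∀ u ∈ S, ∀ v ∈ S, ∀ w, inInterval H u v w → w ∈ S

/-- The geodesic convex hull: the smallest convex set containing `S`. -/
def geoHull {V : Type*} (H : SimpleGraph V) (S : Set V) : Set V :=
  ⋂₀ {C | IsGeoConvex H C ∧ S ⊆ C}

/-- The convexity number: maximum cardinality of a proper convex set. -/
noncomputable def convexityNumber {V : Type*} (H : SimpleGraph V) : ℕ :=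
  sSup {n | ∃ S : Set V, IsGeoConvex H S ∧ S ≠ Set.univ ∧ S.ncard = n}

/-- The diameter of a graph. -/
noncomputable def graphDiam {V : Type*} (H : SimpleGraph V) : ℕ :=
  sSup {d | ∃ u v : V, H.dist u v = d}

/-- The eccentricity of a vertex. -/
noncomputable def graphEcc {V : Type*} (H : SimpleGraph V) (u : V) : ℕ :=
  sSup {d | ∃ v : V, H.dist u v = d}

/-- The degree of a vertex. -/
noncomputable def vdeg {V : Type*} (H : SimpleGraph V) (v : V) : ℕ :=
  (H.neighborSet v).ncard

/-- The maximum degree. -/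
noncomputable def maxDeg {V : Type*} (H : SimpleGraph V) : ℕ :=
  sSup {d | ∃ v : V, vdeg H v = d}

/-- The number of pendant neighbours of a vertex. -/
noncomputable def pendCount {V : Type*} (H : SimpleGraph V) (w : V) : ℕ :=
  {v ∈ H.neighborSet w | vdeg H v = 1}.ncard

section Convexity

variable {V : Type*}

lemma subset_geoHull (H : SimpleGraph V) (S : Set V) : S ⊆ geoHull H S :=
  fun _ hx => Set.mem_sInter.mpr fun _ hC => hC.2 hx

lemma isGeoConvex_geoHull (H : SimpleGraph V) (S : Set V) : IsGeoConvex H (geoHull H S) :=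
  fun _ hx _ hy w hw => Set.mem_sInter.mpr fun C hC =>
    hC.1 _ (Set.mem_sInter.mp hx C hC) _ (Set.mem_sInter.mp hy C hC) w hw

variable {H : SimpleGraph V} {C : Set V}

lemma IsGeoConvex.support_subset (hC : IsGeoConvex H C) {x y : V} (hx : x ∈ C) (hy : y ∈ C)
    (p : H.Walk x y) (hp : p.length = H.dist x y) : ∀ w ∈ p.support, w ∈ C :=
  fun w hw => hC x hx y hy w ⟨p, p.isPath_of_length_eq_dist hp, hp, hw⟩

lemma IsGeoConvex.mem_of_adj_of_adj (hC : IsGeoConvex H C) {x y z : V} (hx : x ∈ C) (hy : y ∈ C)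
    (hne : x ≠ y) (hn : ¬H.Adj x y) (hxz : H.Adj x z) (hzy : H.Adj z y) : z ∈ C := by
  let p : H.Walk x y := .cons hxz (.cons hzy .nil)
  have hlt := (Walk.reachable p).one_lt_dist_of_ne_of_not_adj hne hn
  have hle := dist_le p
  exact hC.support_subset hx hy p (by simp [p] at hle ⊢; omega) z (by simp [p])

end Convexity

namespace SimpleGraph

variable {V : Type*}

lemma exists_adj_adj_adj_of_dist_eq_three {G : SimpleGraph V} {u v : V} (h : G.dist u v = 3) :
    ∃ a b, G.Adj u a ∧ G.Adj a b ∧ G.Adj b v := by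
  obtain ⟨p, hp⟩ := exists_walk_of_dist_ne_zero (h.trans_ne (by norm_num))
  rw [h] at hp
  match p, hp with
  | .cons hua (.cons hab (.cons hbv .nil)), _ => exact ⟨_, _, hua, hab, hbv⟩

lemma IsAcyclic.not_adj_of_adj_of_adj {G : SimpleGraph V} (hG : G.IsAcyclic) {x p q : V}
    (hxp : G.Adj x p) (hxq : G.Adj x q) : ¬G.Adj p q := by
  classical
  exact fun hpq => hG.cliqueFree le_rfl {x, p, q} (is3Clique_triple_iff.2 ⟨hxp, hxq, hpq⟩)

lemma IsAcyclic.eq_of_adj_of_adj {G : SimpleGraph V} (hG : G.IsAcyclic) {p q x y : V}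
    (hpq : p ≠ q) (hpx : G.Adj p x) (hxq : G.Adj x q) (hpy : G.Adj p y) (hyq : G.Adj y q) :
    x = y := by
  have hx : (Walk.cons hpx (.cons hxq .nil)).IsPath := by simp [hpq, hpx.ne, hxq.ne]
  have hy : (Walk.cons hpy (.cons hyq .nil)).IsPath := by simp [hpq, hpy.ne, hyq.ne]
  have hsupp := congrArg (fun r : G.Path p q => r.1.support)
    ((hG.subsingleton_path p q).elim ⟨_, hx⟩ ⟨_, hy⟩)
  simpa using hsupp

end SimpleGraph

section CompPrism

variable {V : Type*} {G : SimpleGraph V}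

@[simp] lemma compPrism_adj_inl_inl {a b : V} :
    (compPrism G).Adj (.inl a) (.inl b) ↔ G.Adj a b := Iff.rfl

@[simp] lemma compPrism_adj_inr_inr {a b : V} :
    (compPrism G).Adj (.inr a) (.inr b) ↔ a ≠ b ∧ ¬G.Adj a b := G.compl_adj a b

@[simp] lemma compPrism_adj_inl_inr {a b : V} :
    (compPrism G).Adj (.inl a) (.inr b) ↔ a = b := Iff.rfl

@[simp] lemma compPrism_adj_inr_inl {a b : V} :
    (compPrism G).Adj (.inr a) (.inl b) ↔ a = b := Iff.rfl

lemma compPrism_dist_inl_inl_eq_three {u v : V} (h : 2 < G.edist u v) :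
    (compPrism G).dist (.inl u) (.inl v) = 3 := by
  obtain ⟨hne, hn, hnbr⟩ := two_lt_edist_iff.1 h
  let p : (compPrism G).Walk (.inl u) (.inl v) :=
    .cons (compPrism_adj_inl_inr.2 rfl) (.cons (compPrism_adj_inr_inr.2 ⟨hne, hn⟩)
      (.cons (compPrism_adj_inr_inl.2 rfl) .nil))
  have hle : (compPrism G).dist (.inl u) (.inl v) ≤ 3 := dist_le p
  have hlt : 2 < (compPrism G).edist (.inl u) (.inl v) := by
    refine two_lt_edist_iff.2 ⟨by simpa using hne, by simpa using hn, ?_⟩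
    refine Set.eq_empty_of_forall_notMem fun w hw => ?_
    rw [mem_commonNeighbors] at hw
    cases w with
    | inl w =>
      exact Set.eq_empty_iff_forall_notMem.1 hnbr w ((G.mem_commonNeighbors).2 (by simpa using hw))
    | inr w =>
      obtain ⟨rfl, rfl⟩ : u = w ∧ v = w := by simpa using hw
      exact hne rfl
  rw [← (Walk.reachable p).coe_dist_eq_edist] at hlt
  norm_cast at hlt
  omega

variable {C : Set (V ⊕ V)}

lemma IsGeoConvex.inr_mem_of_inl_mem (hC : IsGeoConvex (compPrism G) C) {x y : V}
    (hx : .inl x ∈ C) (hy : .inr y ∈ C) (hxy : x ≠ y) (hn : ¬G.Adj x y) : .inr x ∈ C :=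
  hC.mem_of_adj_of_adj hx hy (by simp) (by simpa using hxy) rfl
    (compPrism_adj_inr_inr.2 ⟨hxy, hn⟩)

lemma IsGeoConvex.inl_mem_of_inr_mem (hC : IsGeoConvex (compPrism G) C) {x y : V}
    (hx : .inr x ∈ C) (hy : .inl y ∈ C) (hxy : G.Adj y x) : .inl x ∈ C :=
  hC.mem_of_adj_of_adj hy hx (by simp) (by simpa using hxy.ne) hxy rfl

lemma IsGeoConvex.inr_mem_of_not_adj_of_not_adj (hC : IsGeoConvex (compPrism G) C) {p q x : V}
    (hp : .inr p ∈ C) (hq : .inr q ∈ C) (hpq : G.Adj p q) (hxp : x ≠ p) (hxq : x ≠ q)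
    (hnp : ¬G.Adj x p) (hnq : ¬G.Adj x q) : .inr x ∈ C :=
  hC.mem_of_adj_of_adj hp hq (by simpa using hpq.ne) (by simp [hpq])
    (compPrism_adj_inr_inr.2 ⟨hxp.symm, fun h => hnp h.symm⟩)
    (compPrism_adj_inr_inr.2 ⟨hxq, hnq⟩)

lemma IsGeoConvex.inl_mem_of_reachable (hC : IsGeoConvex (compPrism G) C)
    (hinr : ∀ x, .inr x ∈ C) {p x : V} (hpx : G.Reachable p x) (hp : .inl p ∈ C) :
    .inl x ∈ C := by
  obtain ⟨w⟩ := hpx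
  induction w with
  | nil => exact hp
  | cons h _ ih => exact ih (hC.inl_mem_of_inr_mem (hinr _) hp h)

lemma IsGeoConvex.forall_inr_mem_of_adj_adj_adj (hG : G.IsAcyclic)
    (hC : IsGeoConvex (compPrism G) C) {u a b v : V} (hua : G.Adj u a) (hab : G.Adj a b)
    (hbv : G.Adj b v) (hub : u ≠ b) (hav : a ≠ v) (hu : .inr u ∈ C) (ha : .inr a ∈ C)
    (hb : .inr b ∈ C) (hv : .inr v ∈ C) (x : V) : .inr x ∈ C := by
  by_cases hxu : x = u; · exact hxu ▸ hu
  by_cases hxa : x = a; · exact hxa ▸ ha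
  by_cases hxb : x = b; · exact hxb ▸ hb
  by_cases hxv : x = v; · exact hxv ▸ hv
  by_cases hxu' : G.Adj x u
  · refine hC.inr_mem_of_not_adj_of_not_adj ha hb hab hxa hxb
      (fun h => hG.not_adj_of_adj_of_adj hxu' h hua) fun h => hxa ?_
    exact hG.eq_of_adj_of_adj hub hxu'.symm h hua hab
  by_cases hxa' : G.Adj x a
  · refine hC.inr_mem_of_not_adj_of_not_adj hb hv hbv hxb hxv
      (fun h => hG.not_adj_of_adj_of_adj hxa' h hab) fun h => hxb ?_
    exact hG.eq_of_adj_of_adj hav hxa'.symm h hab hbv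
  exact hC.inr_mem_of_not_adj_of_not_adj hu ha hua hxu hxa hxu' hxa'

theorem IsGeoConvex.eq_univ_of_inl_mem_of_dist_eq_three (hT : G.IsTree)
    (hC : IsGeoConvex (compPrism G) C) {u v : V} (hu : .inl u ∈ C) (hv : .inl v ∈ C)
    (huv : G.dist u v = 3) : C = Set.univ := by
  obtain ⟨a, b, hua, hab, hbv⟩ := exists_adj_adj_adj_of_dist_eq_three huv
  have h3 : 2 < G.edist u v := by
    rw [← (hT.connected u v).coe_dist_eq_edist, huv]; norm_num
  obtain ⟨hne, hnuv, hnbr⟩ := two_lt_edist_iff.1 h3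
  have hnub : ¬G.Adj u b := fun h => Set.eq_empty_iff_forall_notMem.1 hnbr b ⟨h, hbv.symm⟩
  have hnav : ¬G.Adj a v := fun h => Set.eq_empty_iff_forall_notMem.1 hnbr a ⟨hua, h.symm⟩
  have hub : u ≠ b := fun h => hnuv (h ▸ hbv)
  have hav : a ≠ v := fun h => hnuv (h ▸ hua)
  have hd := compPrism_dist_inl_inl_eq_three h3
  have hgeo_tree := hC.support_subset hu hv (.cons (compPrism_adj_inl_inl.2 hua)
    (.cons (compPrism_adj_inl_inl.2 hab) (.cons (compPrism_adj_inl_inl.2 hbv) .nil)))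
    (by simp [hd])
  have hgeo_compl := hC.support_subset hu hv (.cons (compPrism_adj_inl_inr.2 rfl)
    (.cons (compPrism_adj_inr_inr.2 ⟨hne, hnuv⟩) (.cons (compPrism_adj_inr_inl.2 rfl) .nil)))
    (by simp [hd])
  have hRu : .inr u ∈ C := hgeo_compl _ (by simp)
  have hRv : .inr v ∈ C := hgeo_compl _ (by simp)
  have hRa := hC.inr_mem_of_inl_mem (hgeo_tree (.inl a) (by simp)) hRv hav hnav
  have hRb := hC.inr_mem_of_inl_mem (hgeo_tree (.inl b) (by simp)) hRu hub.symm fun h => hnub h.symm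
  have hinr := hC.forall_inr_mem_of_adj_adj_adj hT.isAcyclic hua hab hbv hub hav hRu hRa hRb hRv
  exact Set.eq_univ_of_forall <| Sum.forall.2
    ⟨fun x => hC.inl_mem_of_reachable hinr (hT.connected u x) hu, hinr⟩

end CompPrism

theorem stmt2_general {V : Type*} (T : SimpleGraph V) (hT : T.IsTree) (u v : V) (huv : T.dist u v = 3) :
    geoHull (compPrism T) {Sum.inl u, Sum.inl v} = Set.univ :=
  (isGeoConvex_geoHull _ _).eq_univ_of_inl_mem_of_dist_eq_three hT
    (subset_geoHull _ _ (by simp)) (subset_geoHull _ _ (by simp)) huv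

theorem stmt2 {V : Type*} [Fintype V] (T : SimpleGraph V) (hT : T.IsTree)
    (hd : 3 ≤ graphDiam T) (u v : V) (huv : T.dist u v = 3) :
    geoHull (compPrism T) {Sum.inl u, Sum.inl v} = Set.univ :=
  stmt2_general T hT u v huv
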